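/- arXiv:1606.08405 — 2 statements merged into one kernel-verified Lean document; each statement's English description precedes it below -/
import Mathlib

section
/- (Proposition 1) Let H[1],…,H[K] ∈ ℂ^{N_r×N_t}, let R = (1/K) Σ_{k=1}^K H[k]* H[k] with eigenvalues λ_1(R) ≥ … ≥ λ_{N_t}(R) and corresponding orthonormal eigenvectors forming the columns of V_R, and let N_RF ≤ N_t. Then the supremum of the relaxed hybrid precoding objective J(F) = Σ_{k=1}^K ‖H[k] F (F*F)^{-1/2}‖_F² over all full-column-rank F ∈ ℂ^{N_t×N_RF} equals K Σ_{r=1}^{N_RF} λ_r(R), and it is attained by F = [V_R]_{1:N_RF} A for any invertible matrix A ∈ ℂ^{N_RF×N_RF}, where [V_R]_{1:N_RF} denotes the matrix whose columns are orthonormal eigenvectors for the N_RF largest eigenvalues of R. -/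
open Matrix BigOperators ComplexOrder

noncomputable def frobSq {m n : ℕ} (A : Matrix (Fin m) (Fin n) ℂ) : ℝ :=
  ∑ i, ∑ j, ‖A i j‖ ^ 2

/-- The square root of a positive semidefinite matrix, with the definition that
`Matrix.PosSemidef.sqrt` had in older Mathlib (since removed). -/
noncomputable def psdSqrt {n : Type*} [Fintype n] [DecidableEq n]
    {A : Matrix n n ℂ} (hA : A.PosSemidef) : Matrix n n ℂ :=
  (hA.1.eigenvectorUnitary : Matrix n n ℂ) *
    diagonal ((↑) ∘ (fun x : ℝ => Real.sqrt x) ∘ hA.1.eigenvalues) *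
    (star hA.1.eigenvectorUnitary : Matrix n n ℂ)

/-! With `S = (FᴴF)^{1/2}`, the matrix `Q = F S⁻¹` has orthonormal columns and
`J(F) = K · Re tr(Qᴴ R Q)`. Writing `R = V D Vᴴ` and `P = Vᴴ Q`, one gets
`Re tr(Qᴴ R Q) = ∑ᵢ μᵢ wᵢ` with `wᵢ` the squared norm of the `i`-th row of `P`.
Since `P Pᴴ` is an orthogonal projection of rank `N_RF`, the weights satisfy `0 ≤ wᵢ ≤ 1`
and `∑ wᵢ = N_RF`, and such a weighted sum of a non-increasing sequence is at most the sum
of its first `N_RF` terms. For `F = V₁ A`, with `V₁` the first `N_RF` columns of `V`,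
`J(F) = K · Re tr((AᴴA)⁻¹ Aᴴ D₁ A)`, which is `K · tr D₁` by cyclicity of the trace. -/

section psdSqrt

variable {n : Type*} [Fintype n] [DecidableEq n] {M : Matrix n n ℂ}

lemma psdSqrt_mul_self (hM : M.PosSemidef) : psdSqrt hM * psdSqrt hM = M := by
  set U : Matrix n n ℂ := (hM.1.eigenvectorUnitary : Matrix n n ℂ)
  set D : Matrix n n ℂ := diagonal ((↑) ∘ (fun x : ℝ => Real.sqrt x) ∘ hM.1.eigenvalues)
  have hU : star U * U = 1 := Unitary.coe_star_mul_self _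
  have hD : D * D = diagonal (RCLike.ofReal ∘ hM.1.eigenvalues) := by
    rw [diagonal_mul_diagonal]
    congr 1
    ext i
    simp [← Complex.ofReal_mul, Real.mul_self_sqrt (hM.eigenvalues_nonneg i)]
  conv_rhs => rw [hM.1.spectral_theorem, Unitary.conjStarAlgAut_apply]
  calc psdSqrt hM * psdSqrt hM = U * (D * (star U * U) * D) * star U := by
        simp only [psdSqrt, U, D, Matrix.mul_assoc]
    _ = _ := by rw [hU, Matrix.mul_one, hD]

lemma conjTranspose_psdSqrt (hM : M.PosSemidef) : (psdSqrt hM)ᴴ = psdSqrt hM := by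
  have hD : star ((↑) ∘ (fun x : ℝ => Real.sqrt x) ∘ hM.1.eigenvalues : n → ℂ) =
      (↑) ∘ (fun x : ℝ => Real.sqrt x) ∘ hM.1.eigenvalues := by
    ext i
    simp
  rw [psdSqrt, conjTranspose_mul, conjTranspose_mul, diagonal_conjTranspose, hD]
  simp only [← star_eq_conjTranspose, star_star, Matrix.mul_assoc]

lemma isUnit_det_psdSqrt (hM : M.PosDef) : IsUnit (psdSqrt hM.posSemidef).det := by
  have h : (psdSqrt hM.posSemidef).det * (psdSqrt hM.posSemidef).det = M.det := by
    rw [← det_mul, psdSqrt_mul_self]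
  exact isUnit_iff_ne_zero.mpr fun h0 => hM.det_pos.ne' (by rw [← h, h0, zero_mul])

end psdSqrt

section inv_psdSqrt

variable {m n : Type*} [Fintype m] [Fintype n] [DecidableEq n]

lemma conjTranspose_mul_inv_psdSqrt_mul (F : Matrix m n ℂ) (hF : (Fᴴ * F).PosDef)
    (X : Matrix m m ℂ) :
    (F * (psdSqrt hF.posSemidef)⁻¹)ᴴ * X * (F * (psdSqrt hF.posSemidef)⁻¹) =
      (psdSqrt hF.posSemidef)⁻¹ * (Fᴴ * X * F) * (psdSqrt hF.posSemidef)⁻¹ := by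
  rw [conjTranspose_mul, conjTranspose_nonsing_inv, conjTranspose_psdSqrt]
  simp only [Matrix.mul_assoc]

lemma conjTranspose_mul_self_of_mul_inv_psdSqrt (F : Matrix m n ℂ) (hF : (Fᴴ * F).PosDef) :
    (F * (psdSqrt hF.posSemidef)⁻¹)ᴴ * (F * (psdSqrt hF.posSemidef)⁻¹) = 1 := by
  set S := psdSqrt hF.posSemidef
  have hS := isUnit_det_psdSqrt hF
  calc (F * S⁻¹)ᴴ * (F * S⁻¹) = S⁻¹ * (S * S) * S⁻¹ := by
        rw [psdSqrt_mul_self, conjTranspose_mul, conjTranspose_nonsing_inv,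
          conjTranspose_psdSqrt]
        simp only [S, Matrix.mul_assoc]
    _ = (S⁻¹ * S) * (S * S⁻¹) := by simp only [Matrix.mul_assoc]
    _ = 1 := by rw [nonsing_inv_mul S hS, mul_nonsing_inv S hS, Matrix.mul_one]

lemma trace_conjTranspose_mul_inv_psdSqrt_mul (F : Matrix m n ℂ) (hF : (Fᴴ * F).PosDef)
    (X : Matrix m m ℂ) :
    trace ((F * (psdSqrt hF.posSemidef)⁻¹)ᴴ * X * (F * (psdSqrt hF.posSemidef)⁻¹)) =
      trace ((Fᴴ * F)⁻¹ * (Fᴴ * X * F)) := by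
  rw [conjTranspose_mul_inv_psdSqrt_mul F hF, trace_mul_cycle, ← Matrix.mul_inv_rev,
    psdSqrt_mul_self]

end inv_psdSqrt

lemma frobSq_eq_re_trace {m n : ℕ} (A : Matrix (Fin m) (Fin n) ℂ) :
    frobSq A = (trace (Aᴴ * A)).re := by
  simp only [frobSq, trace, diag, mul_apply, conjTranspose_apply, Complex.re_sum]
  rw [Finset.sum_comm]
  congr! 2 with j i
  rw [Complex.sq_norm, mul_comm, Complex.star_def, Complex.mul_conj, Complex.ofReal_re]

lemma sum_frobSq_mul_eq {K Nr Nt NRF : ℕ} (hK : 0 < K)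
    (H : Fin K → Matrix (Fin Nr) (Fin Nt) ℂ) {R : Matrix (Fin Nt) (Fin Nt) ℂ}
    (hR : R = (K : ℂ)⁻¹ • ∑ k, (H k)ᴴ * H k)
    (Q : Matrix (Fin Nt) (Fin NRF) ℂ) :
    ∑ k, frobSq (H k * Q) = K * (trace (Qᴴ * R * Q)).re := by
  have hsum : ∑ k, (H k)ᴴ * H k = (K : ℂ) • R := by
    rw [hR, smul_smul, mul_inv_cancel₀ (Nat.cast_ne_zero.mpr hK.ne'), one_smul]
  have h : ∑ k, frobSq (H k * Q) = (trace (Qᴴ * (∑ k, (H k)ᴴ * H k) * Q)).re := by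
    simp only [frobSq_eq_re_trace, conjTranspose_mul, Matrix.mul_sum, Matrix.sum_mul,
      trace_sum, Complex.re_sum, Matrix.mul_assoc]
  rw [h, hsum, Matrix.mul_smul, Matrix.smul_mul, trace_smul, smul_eq_mul,
    ← Complex.ofReal_natCast, Complex.re_ofReal_mul]

lemma re_trace_conjTranspose_mul_diagonal_mul {m n : Type*} [Fintype m] [Fintype n]
    [DecidableEq m] (P : Matrix m n ℂ) (μ : m → ℝ) :
    (trace (Pᴴ * diagonal (fun i => (μ i : ℂ)) * P)).re =
      ∑ i, μ i * ∑ j, Complex.normSq (P i j) := by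
  rw [trace_mul_cycle]
  simp [trace, mul_apply, diagonal, Complex.mul_conj, mul_comm]

section isometry

variable {m n : Type*} [Fintype m] [Fintype n] [DecidableEq n] {P : Matrix m n ℂ}

lemma sum_normSq_le_one_of_conjTranspose_mul_self (hP : Pᴴ * P = 1) (i : m) :
    ∑ j, Complex.normSq (P i j) ≤ 1 := by
  set M := P * Pᴴ
  -- `M` is an orthogonal projection, so `M i i = ∑ j, |M i j|² ≥ |M i i|²`.
  set w := ∑ j, Complex.normSq (P i j)
  have hMM : M * M = M := by
    rw [Matrix.mul_assoc, ← Matrix.mul_assoc Pᴴ, hP, Matrix.one_mul]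
  have hMii : M i i = w := by
    simp [M, w, mul_apply, Complex.mul_conj]
  have hMh : M.IsHermitian := isHermitian_mul_conjTranspose_self P
  have hMsq : M i i = ∑ j, (Complex.normSq (M i j) : ℂ) := by
    conv_lhs => rw [← hMM, mul_apply]
    refine Finset.sum_congr rfl fun j _ => ?_
    rw [← hMh.apply j i, Complex.star_def, Complex.mul_conj]
  have hw : w = ∑ j, Complex.normSq (M i j) := by exact_mod_cast hMii.symm.trans hMsq
  have hle : w ^ 2 ≤ w := by
    calc w ^ 2 = Complex.normSq (M i i) := by rw [hMii, Complex.normSq_ofReal, sq]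
      _ ≤ w := hw ▸ Finset.single_le_sum (fun j _ => Complex.normSq_nonneg _)
        (Finset.mem_univ i)
  nlinarith [show 0 ≤ w from Finset.sum_nonneg fun j _ => Complex.normSq_nonneg _]

lemma sum_normSq_eq_card_of_conjTranspose_mul_self (hP : Pᴴ * P = 1) :
    ∑ i, ∑ j, Complex.normSq (P i j) = Fintype.card n := by
  have hcol (j : n) : ∑ i, Complex.normSq (P i j) = 1 := by
    have h := congr_fun (congr_fun hP j) j
    simp only [mul_apply, conjTranspose_apply, one_apply_eq, Complex.star_def, mul_comm,
      Complex.mul_conj] at h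
    exact_mod_cast h
  rw [Finset.sum_comm]
  simp [hcol]

end isometry

lemma sum_mul_le_sum_of_le_of_le {ι : Type*} [Fintype ι] (S : Finset ι) (μ w : ι → ℝ)
    (t : ℝ) (hS : ∀ i ∈ S, t ≤ μ i) (hSc : ∀ i ∉ S, μ i ≤ t) (hw0 : ∀ i, 0 ≤ w i)
    (hw1 : ∀ i, w i ≤ 1) (hw : ∑ i, w i = S.card) :
    ∑ i, μ i * w i ≤ ∑ i ∈ S, μ i := by
  classical
  have key : ∑ i, (μ i - t) * (w i - if i ∈ S then 1 else 0) ≤ 0 := by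
    refine Finset.sum_nonpos fun i _ => ?_
    split_ifs with hi
    · nlinarith [hS i hi, hw1 i]
    · nlinarith [hSc i hi, hw0 i]
  have hind : ∑ i, (if i ∈ S then (1 : ℝ) else 0) = S.card := by simp
  have hμind : ∑ i, μ i * (if i ∈ S then (1 : ℝ) else 0) = ∑ i ∈ S, μ i := by simp
  simp only [sub_mul, mul_sub, Finset.sum_sub_distrib, ← Finset.mul_sum, hind, hμind, hw] at key
  linarith

lemma Antitone.sum_mul_le_sum_castLE {n k : ℕ} (hk : k ≤ n) {μ : Fin n → ℝ}
    (hμ : Antitone μ) (w : Fin n → ℝ) (hw0 : ∀ i, 0 ≤ w i) (hw1 : ∀ i, w i ≤ 1)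
    (hw : ∑ i, w i = k) :
    ∑ i, μ i * w i ≤ ∑ r : Fin k, μ (Fin.castLE hk r) := by
  rcases n.eq_zero_or_pos with rfl | hn
  · obtain rfl : k = 0 := by omega
    simp
  set S := Finset.univ.map (Fin.castLEEmb hk)
  have hmem (i : Fin n) : i ∈ S ↔ (i : ℕ) < k := by
    simp only [S, Finset.mem_map, Finset.mem_univ, true_and, Fin.castLEEmb_apply]
    exact ⟨fun ⟨r, hr⟩ => hr ▸ r.2, fun h => ⟨⟨i, h⟩, rfl⟩⟩
  -- with truncated subtraction this is `μ 0` when `k = 0`, which still separates the two ranges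
  have key := sum_mul_le_sum_of_le_of_le S μ w (μ ⟨k - 1, by omega⟩)
    (fun i hi => hμ (Fin.le_iff_val_le_val.2 (by have := (hmem i).1 hi; simp; omega)))
    (fun i hi => hμ (Fin.le_iff_val_le_val.2 (by have := (hmem i).not.1 hi; simp; omega)))
    hw0 hw1 (by simpa [S] using hw)
  simpa [S] using key

lemma mul_eq_mul_diagonal_of_mulVec_eq {α n : Type*} [CommSemiring α] [Fintype n]
    [DecidableEq n] {R V : Matrix n n α} {μ : n → α}
    (h : ∀ j, R *ᵥ (fun i => V i j) = μ j • fun i => V i j) :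
    R * V = V * diagonal μ := by
  ext i j
  rw [mul_diagonal]
  simpa [mulVec, dotProduct, mul_apply, mul_comm] using congr_fun (h j) i

section unitary

variable {α n : Type*} [CommRing α] [StarRing α] [Fintype n] [DecidableEq n]
  {R V : Matrix n n α} {μ : n → α}

lemma conjTranspose_mul_mul_eq_diagonal (hV : Vᴴ * V = 1) (hRV : R * V = V * diagonal μ) :
    Vᴴ * R * V = diagonal μ := by
  rw [Matrix.mul_assoc, hRV, ← Matrix.mul_assoc, hV, Matrix.one_mul]

lemma eq_mul_diagonal_mul_conjTranspose (hV : Vᴴ * V = 1) (hRV : R * V = V * diagonal μ) :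
    R = V * diagonal μ * Vᴴ := by
  rw [← hRV, Matrix.mul_assoc, mul_eq_one_comm.mp hV, Matrix.mul_one]

end unitary

lemma conjTranspose_submatrix_mul_submatrix {α l m n : Type*} [Semiring α] [Star α] [Fintype l]
    (V : Matrix l n α) (X : Matrix l l α) (e : m → n) :
    (V.submatrix id e)ᴴ * X * V.submatrix id e = (Vᴴ * X * V).submatrix e e := by
  rw [submatrix_mul _ _ _ id _ Function.bijective_id,
    submatrix_mul _ _ _ id _ Function.bijective_id, conjTranspose_submatrix]
  rfl

lemma trace_inv_conjTranspose_mul_self_mul {α n : Type*} [CommRing α] [StarRing α] [Fintype n]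
    [DecidableEq n] {A : Matrix n n α} (hA : IsUnit A.det) (D : Matrix n n α) :
    trace ((Aᴴ * A)⁻¹ * (Aᴴ * D * A)) = trace D := by
  have hAH : IsUnit Aᴴ.det := by rw [det_conjTranspose]; exact hA.star
  calc trace ((Aᴴ * A)⁻¹ * (Aᴴ * D * A))
        = trace (A⁻¹ * ((Aᴴ⁻¹ * Aᴴ) * (D * A))) := by
        simp only [Matrix.mul_inv_rev, Matrix.mul_assoc]
    _ = trace (D * (A * A⁻¹)) := by
        rw [nonsing_inv_mul _ hAH, Matrix.one_mul, trace_mul_comm, Matrix.mul_assoc]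
    _ = trace D := by rw [mul_nonsing_inv _ hA, Matrix.mul_one]

lemma re_trace_conjTranspose_mul_mul_le_sum_castLE {n k : ℕ} (hk : k ≤ n)
    {R V : Matrix (Fin n) (Fin n) ℂ} {μ : Fin n → ℝ} (hμ : Antitone μ) (hV : Vᴴ * V = 1)
    (hRV : R * V = V * diagonal (fun i => (μ i : ℂ))) {Q : Matrix (Fin n) (Fin k) ℂ}
    (hQ : Qᴴ * Q = 1) :
    (trace (Qᴴ * R * Q)).re ≤ ∑ r : Fin k, μ (Fin.castLE hk r) := by
  set P := Vᴴ * Q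
  have hP : Pᴴ * P = 1 := by
    rw [conjTranspose_mul, conjTranspose_conjTranspose, Matrix.mul_assoc, ← Matrix.mul_assoc V,
      mul_eq_one_comm.mp hV, Matrix.one_mul, hQ]
  have hQRQ : Qᴴ * R * Q = Pᴴ * diagonal (fun i => (μ i : ℂ)) * P := by
    rw [eq_mul_diagonal_mul_conjTranspose hV hRV]
    simp only [P, conjTranspose_mul, conjTranspose_conjTranspose, Matrix.mul_assoc]
  rw [hQRQ, re_trace_conjTranspose_mul_diagonal_mul]
  refine hμ.sum_mul_le_sum_castLE hk _
    (fun i => Finset.sum_nonneg fun j _ => Complex.normSq_nonneg _)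
    (sum_normSq_le_one_of_conjTranspose_mul_self hP) ?_
  rw [sum_normSq_eq_card_of_conjTranspose_mul_self hP, Fintype.card_fin]

/-- Proposition 1: With `R = (1/K) ∑ₖ H[k]ᴴ H[k]`, eigenvalues `μ` in
non-increasing order with corresponding orthonormal eigenvectors forming the columns of
the unitary `V`, and `N_RF ≤ N_t`, the relaxed objective
`J(F) = ∑ₖ ‖H[k] F (FᴴF)^{-1/2}‖_F²` over full-column-rank `F` is bounded above by
`K ∑_{r < N_RF} μ r`, and this value is attained by `F = [V]_{1:N_RF} A` for every
invertible `A`. -/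
theorem stmt_3 (K Nr Nt NRF : ℕ) (hK : 0 < K) (hle : NRF ≤ Nt)
    (H : Fin K → Matrix (Fin Nr) (Fin Nt) ℂ)
    (R : Matrix (Fin Nt) (Fin Nt) ℂ)
    (hR : R = (K : ℂ)⁻¹ • ∑ k, (H k)ᴴ * H k)
    (μ : Fin Nt → ℝ) (hanti : Antitone μ)
    (V : Matrix (Fin Nt) (Fin Nt) ℂ)
    (hV : Vᴴ * V = 1)
    (heig : ∀ j : Fin Nt, R *ᵥ (fun i => V i j) = ((μ j : ℂ)) • (fun i => V i j)) :
    (∀ F : Matrix (Fin Nt) (Fin NRF) ℂ, F.rank = NRF →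
      ∀ hPD : (Fᴴ * F).PosDef,
        ∑ k, frobSq (H k * F * (psdSqrt hPD.posSemidef)⁻¹)
          ≤ K * ∑ r : Fin NRF, μ (Fin.castLE hle r)) ∧
    (∀ A : Matrix (Fin NRF) (Fin NRF) ℂ, IsUnit A.det →
      ∃ hPD : ((V.submatrix id (Fin.castLE hle) * A)ᴴ *
                (V.submatrix id (Fin.castLE hle) * A)).PosDef,
        ∑ k, frobSq (H k * (V.submatrix id (Fin.castLE hle) * A) * (psdSqrt hPD.posSemidef)⁻¹)
          = K * ∑ r : Fin NRF, μ (Fin.castLE hle r)) := by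
  have hRV := mul_eq_mul_diagonal_of_mulVec_eq heig
  simp_rw [Matrix.mul_assoc (H _)]
  refine ⟨fun F _ hF => ?_, fun A hA => ?_⟩
  · rw [sum_frobSq_mul_eq hK H hR]
    gcongr
    exact re_trace_conjTranspose_mul_mul_le_sum_castLE hle hanti hV hRV
      (conjTranspose_mul_self_of_mul_inv_psdSqrt F hF)
  set V₁ := V.submatrix id (Fin.castLE hle)
  have hconj (X : Matrix (Fin Nt) (Fin Nt) ℂ) :
      (V₁ * A)ᴴ * X * (V₁ * A) =
        Aᴴ * (Vᴴ * X * V).submatrix (Fin.castLE hle) (Fin.castLE hle) * A := by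
    rw [← conjTranspose_submatrix_mul_submatrix]
    simp only [V₁, conjTranspose_mul, Matrix.mul_assoc]
  have hFF : (V₁ * A)ᴴ * (V₁ * A) = Aᴴ * A := by
    simpa [hV, submatrix_one _ (Fin.castLE_injective hle)] using hconj 1
  have hFRF : (V₁ * A)ᴴ * R * (V₁ * A) =
      Aᴴ * diagonal (fun r => (μ (Fin.castLE hle r) : ℂ)) * A := by
    rw [hconj, conjTranspose_mul_mul_eq_diagonal hV hRV,
      submatrix_diagonal _ _ (Fin.castLE_injective hle)]
    rfl
  have hPD : ((V₁ * A)ᴴ * (V₁ * A)).PosDef :=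
    hFF ▸ PosDef.conjTranspose_mul_self A
      (mulVec_injective_iff_isUnit.2 ((isUnit_iff_isUnit_det A).2 hA))
  refine ⟨hPD, ?_⟩
  rw [sum_frobSq_mul_eq hK H hR, trace_conjTranspose_mul_inv_psdSqrt_mul _ hPD, hFF, hFRF,
    trace_inv_conjTranspose_mul_self_mul hA, trace_diagonal, Complex.re_sum]
  simp
end

section
/- (Proposition 3, lower bound) Let R ∈ ℂ^{n×n} with n ≥ 2 be Hermitian with all diagonal entries equal to a common real value. Define the normalized Minkowski ℓ1-norm approximation λ̂_1(R) = (1/n) Σ_{i=1}^n Σ_{j=1}^n |R_{ij}|, and set m = Tr(R)/n and s = ( Tr(R²)/n − m² )^{1/2}. Then λ̂_1(R) ≥ m + s/(n−1)^{1/2}, i.e., the approximation λ̂_1 is at least the Wolkowicz–Styan lower bound on the largest eigenvalue λ_1(R). -/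
/-!
With `m = c` the common diagonal entry, `n s² = Tr(R²) - n c² = Q`, the sum of the squared moduli
of the off-diagonal entries, while `n λ̂₁ ≥ n c + S` with `S` the sum of their moduli. Since
`|R i j| = |R j i|`, every off-diagonal modulus has a distinct partner of the same size, so
`2 Q ≤ S²`; for `n ≥ 2` this gives `Q / (n (n - 1)) ≤ (S / n)²`, i.e. `s / √(n - 1) ≤ S / n`.
-/

open Matrix BigOperators

section OffDiag

open Finset

variable {ι : Type*} [Fintype ι] [DecidableEq ι]

theorem Finset.sum_sum_eq_sum_diag_add_sum_offDiag {M : Type*} [AddCommMonoid M]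
    (f : ι → ι → M) : ∑ i, ∑ j, f i j = ∑ i, f i i + ∑ p ∈ univ.offDiag, f p.1 p.2 := by
  rw [← sum_product' univ univ f, ← diag_union_offDiag, sum_union (disjoint_diag_offDiag _),
    sum_diag]

variable {a : ι → ι → ℝ}

theorem add_le_sum_offDiag (ha : ∀ i j, 0 ≤ a i j) {i j : ι} (hij : i ≠ j) :
    a i j + a j i ≤ ∑ p ∈ univ.offDiag, a p.1 p.2 := by
  have hpair : (i, j) ≠ (j, i) := fun h => hij (congrArg Prod.fst h)
  have hsub : {(i, j), (j, i)} ⊆ (univ.offDiag : Finset (ι × ι)) := by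
    simp [insert_subset_iff, hij, hij.symm]
  calc a i j + a j i = ∑ p ∈ {(i, j), (j, i)}, a p.1 p.2 :=
        (sum_pair (f := fun p : ι × ι => a p.1 p.2) hpair).symm
    _ ≤ _ := sum_le_sum_of_subset_of_nonneg hsub fun p _ _ => ha p.1 p.2

theorem two_mul_sum_offDiag_sq_le_sq_sum_offDiag (ha : ∀ i j, 0 ≤ a i j)
    (hsymm : ∀ i j, a j i = a i j) :
    2 * ∑ p ∈ univ.offDiag, a p.1 p.2 ^ 2 ≤ (∑ p ∈ univ.offDiag, a p.1 p.2) ^ 2 := by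
  set S := ∑ p ∈ univ.offDiag, a p.1 p.2
  calc 2 * ∑ p ∈ univ.offDiag, a p.1 p.2 ^ 2
      = ∑ p ∈ univ.offDiag, a p.1 p.2 * (a p.1 p.2 + a p.2 p.1) := by
        rw [mul_sum]
        exact sum_congr rfl fun p _ => by rw [hsymm]; ring
    _ ≤ ∑ p ∈ univ.offDiag, a p.1 p.2 * S := by
        refine sum_le_sum fun p hp => mul_le_mul_of_nonneg_left ?_ (ha _ _)
        exact add_le_sum_offDiag ha (mem_offDiag.mp hp).2.2
    _ = S ^ 2 := by rw [← sum_mul, sq]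

end OffDiag

theorem Matrix.IsHermitian.re_trace_mul_self {ι 𝕜 : Type*} [Fintype ι] [RCLike 𝕜]
    {A : Matrix ι ι 𝕜} (hA : A.IsHermitian) :
    RCLike.re (trace (A * A)) = ∑ i, ∑ j, ‖A i j‖ ^ 2 := by
  have hterm : ∀ i j, A i j * A j i = ((‖A i j‖ ^ 2 : ℝ) : 𝕜) := fun i j => by
    rw [← hA.apply j i, RCLike.star_def, RCLike.mul_conj, RCLike.ofReal_pow]
  simp only [trace, diag, mul_apply, hterm, map_sum, RCLike.ofReal_re]

theorem sqrt_div_div_sqrt_sub_one_le {n Q S : ℝ} (hn : 2 ≤ n) (hS : 0 ≤ S)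
    (hQS : 2 * Q ≤ S ^ 2) : √(Q / n) / √(n - 1) ≤ S / n := by
  rw [← Real.sqrt_div' _ (by linarith), Real.sqrt_le_iff, div_div, div_pow,
    div_le_div_iff₀ (by nlinarith) (by positivity)]
  refine ⟨by positivity, ?_⟩
  have hn1 : 0 ≤ n - 1 := by linarith
  rcases le_total 0 Q with hQ | hQ
  · nlinarith [mul_le_mul_of_nonneg_left hQS hn1, mul_nonneg hQ (sub_nonneg.2 hn)]
  · nlinarith [mul_nonneg (sq_nonneg S) hn1]

/-- Proposition 3, lower bound: For an `n × n` Hermitian matrix `R`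
(`n ≥ 2`) with constant diagonal, the normalized Minkowski ℓ1-norm approximation
`λ̂₁(R) = (1/n) ∑_{i,j} |R_{ij}|` is at least the Wolkowicz–Styan lower bound
`m + s/√(n−1)`, where `m = Tr(R)/n` and `s = √(Tr(R²)/n − m²)`. -/
theorem stmt_10 (n : ℕ) (hn : 2 ≤ n)
    (R : Matrix (Fin n) (Fin n) ℂ) (hR : R.IsHermitian)
    (c : ℝ) (hdiag : ∀ i, R i i = (c : ℂ))
    (m s : ℝ)
    (hm : m = (Matrix.trace R).re / n)
    (hs : s = Real.sqrt ((Matrix.trace (R * R)).re / n - m ^ 2)) :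
    m + s / Real.sqrt ((n : ℝ) - 1)
      ≤ (1 / n : ℝ) * ∑ i, ∑ j, ‖R i j‖ := by
  have hn0 : (0 : ℝ) < n := by positivity
  set S := ∑ p ∈ Finset.univ.offDiag, ‖R p.1 p.2‖
  set Q := ∑ p ∈ Finset.univ.offDiag, ‖R p.1 p.2‖ ^ 2
  have hnorm_diag : ∀ i, ‖R i i‖ = |c| := fun i => by
    rw [hdiag, Complex.norm_real, Real.norm_eq_abs]
  have hm_eq : m = c := by simp [hm, trace, hdiag, hn0.ne']
  have hs_eq : s = √(Q / n) := by
    rw [hs, ← RCLike.re_to_complex, hR.re_trace_mul_self,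
      Finset.sum_sum_eq_sum_diag_add_sum_offDiag (fun i j => ‖R i j‖ ^ 2)]
    simp only [hnorm_diag, sq_abs, Finset.sum_const, Finset.card_univ, Fintype.card_fin,
      nsmul_eq_mul, hm_eq]
    congr 1
    field_simp
    ring
  have hsum : ∑ i, ∑ j, ‖R i j‖ = n * |c| + S := by
    simp [Finset.sum_sum_eq_sum_diag_add_sum_offDiag (fun i j => ‖R i j‖), hnorm_diag, S]
  have hQS : 2 * Q ≤ S ^ 2 := two_mul_sum_offDiag_sq_le_sq_sum_offDiag
    (fun i j => norm_nonneg (R i j)) fun i j => by rw [← hR.apply i j, norm_star]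
  calc m + s / √((n : ℝ) - 1) ≤ c + S / n := by
        rw [hm_eq, hs_eq]
        have hn2 : (2 : ℝ) ≤ n := mod_cast hn
        linarith [sqrt_div_div_sqrt_sub_one_le hn2 (by positivity) hQS]
    _ ≤ 1 / n * (n * |c| + S) := by
        rw [mul_add, ← mul_assoc, one_div_mul_cancel hn0.ne', one_mul, one_div_mul_eq_div]
        linarith [le_abs_self c]
    _ = _ := by rw [hsum]
end
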